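/- arXiv:2211.10301 — 2 statements merged into one kernel-verified Lean document; each statement's English description precedes it below -/
import Mathlib

section
/- Let $q\in(1,\frac{m+2}{m})$ and let $u_q>0$ be a smooth minimizer of $E(f)=\int_{\mathbb{S}^{2m+1}}(|\nabla_b f|^2+\frac{m^2}{4}f^2)d\sigma$ subject to $\|f\|_{q+1}=1$, satisfying $-\Delta_b u_q+\frac{m^2}{4}u_q=\Lambda_q u_q^q$ and the second variation inequality $E(f)\ge q\,E(u_q)\int u_q^{q-1}f^2 d\sigma$ for all $f$ with $\int u_q^q f\,d\sigma=0$, together with the moment condition $\int_{\mathbb{S}^{2m+1}} u_q^{q+1}\xi\,d\sigma(\xi)=0$. Then $(q-1)\int_{\mathbb{S}^{2m+1}}|\nabla_b u_q|^2 d\sigma\le\frac{m^2}{4}\big(\frac{m+2}{m}-q\big)\int_{\mathbb{S}^{2m+1}}u_q^2 d\sigma$. -/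
noncomputable section
open MeasureTheory Real

/-- Hermitian pairing `ξ · conj η` on `ℂ^{m+1}`. -/
def hdot {m : ℕ} (ξ η : EuclideanSpace ℂ (Fin (m + 1))) : ℂ :=
  ∑ i, ξ i * starRingEnd ℂ (η i)

instance {m : ℕ} : MeasurableSpace (EuclideanSpace ℂ (Fin (m + 1))) := borel _
instance {m : ℕ} : BorelSpace (EuclideanSpace ℂ (Fin (m + 1))) := ⟨rfl⟩
instance {m : ℕ} : MeasureSpace (EuclideanSpace ℂ (Fin (m + 1))) :=
  ⟨(Module.finBasis ℝ (EuclideanSpace ℂ (Fin (m + 1)))).addHaar⟩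

/-- The unit sphere `S^{2m+1} ⊆ ℂ^{m+1}`. -/
abbrev Sph (m : ℕ) := Metric.sphere (0 : EuclideanSpace ℂ (Fin (m + 1))) 1

/-- The surface measure on `S^{2m+1}`. -/
def sphMeasure (m : ℕ) : Measure (Sph m) :=
  (volume : Measure (EuclideanSpace ℂ (Fin (m + 1)))).toSphere

/-!
Testing the second variation inequality with `f = u ξ_j` for the `2m + 2` real coordinates
`ξ_j` of `ℂ^{m+1}` (admissible by the moment condition) and summing over `j` gives, since
`∑ ξ_j² = 1` on the sphere and by the coordinate integration-by-parts identity,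
`q E(u) ≤ E(u) + (m/2) ∫ u²`. Green's identity and the Euler–Lagrange equation give
`E(u) = Λ` and `∫ |∇_b u|² = Λ - (m²/4) ∫ u²`, and eliminating `Λ` yields the estimate.
-/

theorem integrable_of_integral_add_ne_zero {α : Type*} [MeasurableSpace α] {μ : Measure α}
    {g h : α → ℝ} (hh : Integrable h μ) (hne : ∫ x, (g x + h x) ∂μ ≠ 0) : Integrable g μ := by
  by_contra hg
  exact hne (integral_undef fun hgh => hg ((hgh.sub hh).congr (ae_of_all _ fun x => by simp)))

section CompactSpace

variable {α : Type*} [TopologicalSpace α] [CompactSpace α] [MeasurableSpace α]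
  [OpensMeasurableSpace α] {μ : Measure α} [IsFiniteMeasure μ]

theorem Continuous.integrable_of_compactSpace {E : Type*} [NormedAddCommGroup E] {f : α → E}
    (hf : Continuous f) : Integrable f μ :=
  hf.integrable_of_hasCompactSupport (.of_compactSpace f)

theorem integral_mul_eq_of_eulerLagrange {u L : α → ℝ} {c Λ q : ℝ} (hu0 : ∀ x, 0 < u x)
    (hu : Continuous u) (hpde : ∀ x, -L x + c * u x = Λ * u x ^ q)
    (hnorm : ∫ x, u x ^ (q + 1) ∂μ = 1) :
    ∫ x, u x * L x ∂μ = c * ∫ x, u x ^ 2 ∂μ - Λ := by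
  have hL : (fun x => u x * L x) = fun x => c * u x ^ 2 - Λ * u x ^ (q + 1) := by
    funext x
    rw [Real.rpow_add_one (hu0 x).ne', show L x = c * u x - Λ * u x ^ q by linarith [hpde x]]
    ring
  have hu2 : Integrable (fun x => c * u x ^ 2) μ :=
    (hu.pow 2).integrable_of_compactSpace.const_mul c
  have hu_rpow : Integrable (fun x => Λ * u x ^ (q + 1)) μ :=
    (hu.rpow_const fun x => Or.inl (hu0 x).ne').integrable_of_compactSpace.const_mul Λ
  rw [hL, integral_sub hu2 hu_rpow, integral_const_mul, integral_const_mul, hnorm, mul_one]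

theorem sum_integral_mul_sq {ι : Type*} [Fintype ι] {φ : ι → α → ℝ} (hφ : ∀ j, Continuous (φ j))
    (hsq : ∀ x, ∑ j, φ j x ^ 2 = 1) {w : α → ℝ} (hw : Continuous w) :
    ∑ j, ∫ x, w x * φ j x ^ 2 ∂μ = ∫ x, w x ∂μ := by
  have hint : ∀ j, Integrable (fun x => w x * φ j x ^ 2) μ := fun j =>
    (hw.mul ((hφ j).pow 2)).integrable_of_compactSpace
  rw [← integral_finsetSum _ fun j _ => hint j]
  congr 1 with x
  rw [← Finset.mul_sum, hsq, mul_one]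

end CompactSpace

/-- The paper's `E(f)` when `c = m²/4`. -/
def energy {α : Type*} [MeasurableSpace α] (μ : Measure α) (gradSq : (α → ℝ) → (α → ℝ)) (c : ℝ)
    (f : α → ℝ) : ℝ :=
  ∫ x, (gradSq f x + c * f x ^ 2) ∂μ

section SecondVariation

variable {α : Type*} [TopologicalSpace α] [CompactSpace α] [MeasurableSpace α]
  [OpensMeasurableSpace α] {μ : Measure α} [IsFiniteMeasure μ]
  (gradSq : (α → ℝ) → (α → ℝ)) {c q : ℝ} {u : α → ℝ}

theorem energy_eq_integral_add (hgrad : Integrable (gradSq u) μ) (hu : Continuous u) :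
    energy μ gradSq c u = (∫ x, gradSq u x ∂μ) + c * ∫ x, u x ^ 2 ∂μ := by
  have hu2 : Integrable (fun x => c * u x ^ 2) μ :=
    (hu.pow 2).integrable_of_compactSpace.const_mul c
  rw [energy, integral_add hgrad hu2, integral_const_mul]

variable [μ.IsOpenPosMeasure]

theorem integrable_gradSq_mul_and_le_of_second_variation (hq : 0 < q)
    (hE : 0 < energy μ gradSq c u) (hu0 : ∀ x, 0 < u x) (hu : Continuous u)
    (h2nd : ∀ f : α → ℝ, ∫ x, u x ^ q * f x ∂μ = 0 →
      q * energy μ gradSq c u * ∫ x, u x ^ (q - 1) * f x ^ 2 ∂μ ≤ energy μ gradSq c f)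
    {φ : α → ℝ} (hφ : Continuous φ) (hφne : ∃ x, φ x ≠ 0)
    (hmom : ∫ x, u x ^ (q + 1) * φ x ∂μ = 0) :
    Integrable (gradSq fun x => u x * φ x) μ ∧
      q * energy μ gradSq c u * ∫ x, u x ^ (q + 1) * φ x ^ 2 ∂μ ≤
        (∫ x, gradSq (fun y => u y * φ y) x ∂μ) + c * ∫ x, u x ^ 2 * φ x ^ 2 ∂μ := by
  have hrpow : ∀ x, u x ^ (q + 1) = u x ^ (q - 1) * u x ^ 2 := fun x => by
    rw [show q + 1 = q - 1 + 1 + 1 by ring, Real.rpow_add_one (hu0 x).ne',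
      Real.rpow_add_one (hu0 x).ne', sq, mul_assoc]
  have h := h2nd (fun x => u x * φ x) (by
    simpa only [Real.rpow_add_one (hu0 _).ne', mul_assoc, mul_comm (u _)] using hmom)
  rw [integral_congr_ae (g := fun x => u x ^ (q + 1) * φ x ^ 2)
    (ae_of_all _ fun x => by simp only [hrpow]; ring)] at h
  have hA : 0 < ∫ x, u x ^ (q + 1) * φ x ^ 2 ∂μ := by
    obtain ⟨x₀, hx₀⟩ := hφne
    have hw : Continuous fun x => u x ^ (q + 1) * φ x ^ 2 :=
      (hu.rpow_const fun x => Or.inl (hu0 x).ne').mul (hφ.pow 2)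
    exact integral_pos_of_integrable_nonneg_nonzero (x := x₀) hw hw.integrable_of_compactSpace
      (fun x => mul_nonneg (Real.rpow_nonneg (hu0 x).le _) (sq_nonneg _))
      (mul_ne_zero (Real.rpow_pos_of_pos (hu0 x₀) _).ne' (pow_ne_zero 2 hx₀))
  have hsq_int : Integrable (fun x => c * (u x * φ x) ^ 2) μ :=
    ((hu.mul hφ).pow 2).integrable_of_compactSpace.const_mul c
  -- a non-integrable `gradSq (u φ)` would make `energy (u φ)` the junk value `0 < q E(u) A`
  have hgrad : Integrable (gradSq fun x => u x * φ x) μ :=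
    integrable_of_integral_add_ne_zero hsq_int
      (ne_of_gt (lt_of_lt_of_le (mul_pos (mul_pos hq hE) hA) h))
  rw [energy_eq_integral_add gradSq hgrad (hu.mul hφ)] at h
  simp only [mul_pow] at h
  exact ⟨hgrad, h⟩

theorem sub_one_mul_energy_le_of_second_variation {ι : Type*} [Fintype ι] {κ : ℝ} (hq : 0 < q)
    (hE : 0 < energy μ gradSq c u) (hgrad : Integrable (gradSq u) μ) (hu0 : ∀ x, 0 < u x)
    (hu : Continuous u) (hnorm : ∫ x, u x ^ (q + 1) ∂μ = 1)
    (h2nd : ∀ f : α → ℝ, ∫ x, u x ^ q * f x ∂μ = 0 →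
      q * energy μ gradSq c u * ∫ x, u x ^ (q - 1) * f x ^ 2 ∂μ ≤ energy μ gradSq c f)
    {φ : ι → α → ℝ} (hφ : ∀ j, Continuous (φ j)) (hsq : ∀ x, ∑ j, φ j x ^ 2 = 1)
    (hφne : ∀ j, ∃ x, φ j x ≠ 0) (hmom : ∀ j, ∫ x, u x ^ (q + 1) * φ j x ∂μ = 0)
    (hcoord : ∫ x, ∑ j, gradSq (fun y => u y * φ j y) x ∂μ = energy μ gradSq κ u) :
    (q - 1) * energy μ gradSq c u ≤ κ * ∫ x, u x ^ 2 ∂μ := by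
  have hj := fun j => integrable_gradSq_mul_and_le_of_second_variation gradSq hq hE hu0 hu h2nd
    (hφ j) (hφne j) (hmom j)
  have hsum := Finset.sum_le_sum fun j (_ : j ∈ Finset.univ) => (hj j).2
  rw [← Finset.mul_sum, Finset.sum_add_distrib, ← Finset.mul_sum,
    sum_integral_mul_sq hφ hsq (hu.rpow_const fun x => Or.inl (hu0 x).ne'), hnorm,
    sum_integral_mul_sq (w := fun x => u x ^ 2) hφ hsq (hu.pow 2),
    ← integral_finsetSum _ fun j _ => (hj j).1, hcoord, energy_eq_integral_add gradSq hgrad hu,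
    energy_eq_integral_add gradSq hgrad hu] at hsum
  rw [energy_eq_integral_add gradSq hgrad hu]
  linarith

end SecondVariation

def realCoord (ι : Type*) [Fintype ι] : ι ⊕ ι → EuclideanSpace ℂ ι →L[ℝ] ℝ :=
  Sum.elim (fun i => Complex.reCLM.comp ((EuclideanSpace.proj i).restrictScalars ℝ))
    (fun i => Complex.imCLM.comp ((EuclideanSpace.proj i).restrictScalars ℝ))

section RealCoord

variable {ι : Type*} [Fintype ι]

@[simp]
theorem realCoord_inl (i : ι) (z : EuclideanSpace ℂ ι) : realCoord ι (.inl i) z = (z i).re :=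
  rfl

@[simp]
theorem realCoord_inr (i : ι) (z : EuclideanSpace ℂ ι) : realCoord ι (.inr i) z = (z i).im :=
  rfl

theorem sum_realCoord_sq (z : EuclideanSpace ℂ ι) : ∑ j, realCoord ι j z ^ 2 = ‖z‖ ^ 2 := by
  rw [EuclideanSpace.norm_sq_eq]
  simp only [Fintype.sum_sum_type, realCoord_inl, realCoord_inr, ← Finset.sum_add_distrib]
  refine Finset.sum_congr rfl fun i _ => ?_
  rw [Complex.sq_norm, Complex.normSq_apply]
  ring

theorem sum_realCoord_sq_of_mem_sphere (ξ : Metric.sphere (0 : EuclideanSpace ℂ ι) 1) :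
    ∑ j, realCoord ι j ξ ^ 2 = 1 := by
  rw [sum_realCoord_sq, mem_sphere_zero_iff_norm.mp ξ.2, one_pow]

theorem exists_realCoord_ne_zero (j : ι ⊕ ι) :
    ∃ ξ : Metric.sphere (0 : EuclideanSpace ℂ ι) 1, realCoord ι j ξ ≠ 0 := by
  classical
  rcases j with i | i
  · exact ⟨⟨EuclideanSpace.single i 1, by simp⟩, by simp⟩
  · exact ⟨⟨EuclideanSpace.single i Complex.I, by simp⟩, by simp⟩

theorem integral_mul_realCoord_eq_zero {α : Type*} [MeasurableSpace α] {μ : Measure α}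
    {g : α → ℝ} {F : α → EuclideanSpace ℂ ι} (hint : Integrable (fun x => g x • F x) μ)
    (hmom : ∫ x, g x • F x ∂μ = 0) (j : ι ⊕ ι) : ∫ x, g x * realCoord ι j (F x) ∂μ = 0 := by
  simpa only [map_smul, smul_eq_mul, hmom, map_zero] using
    (realCoord ι j).integral_comp_comm hint

end RealCoord

instance (m : ℕ) : (volume : Measure (EuclideanSpace ℂ (Fin (m + 1)))).IsAddHaarMeasure :=
  inferInstanceAs (Module.finBasis ℝ _).addHaar.IsAddHaarMeasure

instance (m : ℕ) : IsFiniteMeasure (sphMeasure m) :=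
  inferInstanceAs (IsFiniteMeasure (Measure.toSphere _))

instance (m : ℕ) : (sphMeasure m).IsOpenPosMeasure :=
  inferInstanceAs (Measure.toSphere _).IsOpenPosMeasure

/-- `gradSq f` stands for `|∇_b f|²` and `Deltab` for `Δ_b`; both are given abstractly,
through the identities they satisfy. -/
theorem subcritical_energy_estimate {m : ℕ} (hm : 1 ≤ m)
    (gradSq : (Sph m → ℝ) → (Sph m → ℝ))
    (Deltab : (Sph m → ℝ) → (Sph m → ℝ))
    -- Green's identity relating `|∇_b f|²` and `Δ_b`:
    (hGreen : ∀ f : Sph m → ℝ,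
      (∫ ξ, gradSq f ξ ∂(sphMeasure m)) = -∫ ξ, f ξ * Deltab f ξ ∂(sphMeasure m))
    -- integration-by-parts identity for the coordinate multipliers
    -- `x_i = Re ξ_i`, `y_i = Im ξ_i` (using `∑ᵢ (xᵢ Δ_b xᵢ + yᵢ Δ_b yᵢ) = -m/2`):
    (hcoord : ∀ w : Sph m → ℝ,
      (∫ ξ, (∑ i : Fin (m + 1),
          (gradSq (fun ζ => w ζ * ((ζ : EuclideanSpace ℂ (Fin (m + 1))) i).re) ξ +
            gradSq (fun ζ => w ζ * ((ζ : EuclideanSpace ℂ (Fin (m + 1))) i).im) ξ))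
        ∂(sphMeasure m)) =
      ∫ ξ, (gradSq w ξ + (m / 2 : ℝ) * w ξ ^ 2) ∂(sphMeasure m))
    (q : ℝ) (hq1 : 1 < q) (hq2 : q < (m + 2) / m)
    (u : Sph m → ℝ) (hu0 : ∀ ξ, 0 < u ξ) (hucont : Continuous u)
    (Lambda : ℝ) (hLambda : 0 < Lambda)
    -- the Euler–Lagrange equation `-Δ_b u + (m²/4) u = Λ_q u^q`:
    (hpde : ∀ ξ, -Deltab u ξ + (m ^ 2 / 4 : ℝ) * u ξ = Lambda * u ξ ^ q)
    -- normalization `‖u‖_{q+1} = 1`: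
    (hnorm : (∫ ξ, u ξ ^ (q + 1) ∂(sphMeasure m)) = 1)
    -- the second variation inequality `E(f) ≥ q E(u) ∫ u^{q-1} f²`
    -- for all `f` with `∫ u^q f = 0`:
    (h2nd : ∀ f : Sph m → ℝ, (∫ ξ, u ξ ^ q * f ξ ∂(sphMeasure m)) = 0 →
      q * (∫ ξ, (gradSq u ξ + (m ^ 2 / 4 : ℝ) * u ξ ^ 2) ∂(sphMeasure m)) *
          (∫ ξ, u ξ ^ (q - 1) * f ξ ^ 2 ∂(sphMeasure m)) ≤
        ∫ ξ, (gradSq f ξ + (m ^ 2 / 4 : ℝ) * f ξ ^ 2) ∂(sphMeasure m))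
    -- the moment-zero condition `∫ u^{q+1} ξ dσ(ξ) = 0`:
    (hmom : (∫ ξ : Sph m, u ξ ^ (q + 1) • (ξ : EuclideanSpace ℂ (Fin (m + 1)))
      ∂(sphMeasure m)) = 0) :
    (q - 1) * (∫ ξ, gradSq u ξ ∂(sphMeasure m)) ≤
      (m ^ 2 / 4 : ℝ) * ((m + 2) / m - q) * ∫ ξ, u ξ ^ 2 ∂(sphMeasure m) := by
  have hGu : ∫ ξ, gradSq u ξ ∂(sphMeasure m) =
      Lambda - (m ^ 2 / 4 : ℝ) * ∫ ξ, u ξ ^ 2 ∂(sphMeasure m) := by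
    rw [hGreen u, integral_mul_eq_of_eulerLagrange hu0 hucont hpde hnorm]
    ring
  by_cases hGint : Integrable (gradSq u) (sphMeasure m)
  swap
  · rw [integral_undef hGint, mul_zero]
    have : 0 ≤ ((m : ℝ) + 2) / m - q := by linarith
    positivity
  have hE : energy (sphMeasure m) gradSq (m ^ 2 / 4) u = Lambda := by
    rw [energy_eq_integral_add gradSq hGint hucont, hGu]
    ring
  have hkey := sub_one_mul_energy_le_of_second_variation gradSq (κ := m / 2) (by linarith)
    (hE ▸ hLambda) hGint hu0 hucont hnorm h2nd (φ := fun j ξ => realCoord (Fin (m + 1)) j ξ)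
    (fun j => (realCoord _ j).continuous.comp continuous_subtype_val)
    sum_realCoord_sq_of_mem_sphere exists_realCoord_ne_zero
    (integral_mul_realCoord_eq_zero
      ((hucont.rpow_const fun ξ => Or.inl (hu0 ξ).ne').smul continuous_subtype_val
        |>.integrable_of_compactSpace) hmom)
    (by
      simp only [Fintype.sum_sum_type, realCoord_inl, realCoord_inr, ← Finset.sum_add_distrib]
      exact hcoord u)
  have hm0 : (m : ℝ) ≠ 0 := Nat.cast_ne_zero.mpr (by omega)
  have hcoef : (m ^ 2 / 4 : ℝ) * ((m + 2) / m - q) = m / 2 + m ^ 2 / 4 - q * (m ^ 2 / 4) := by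
    field_simp
    ring
  rw [hE] at hkey
  rw [hGu, hcoef]
  linarith
end
end

section
/- Let $0<\lambda<Q=2m+2$ and $p>\frac{2Q}{2Q-\lambda}$, and suppose $u>0$ satisfies $I_\lambda(u)=u^{p-1}$, the second-variation inequality $\langle I_\lambda f,f\rangle\le (p-1)\int u^{p-2}f^2 d\sigma$ for all real $f$ with $\int u^{p-1}f\,d\sigma=0$, and the moment condition $\int u^p\xi\,d\sigma(\xi)=0$. Then $\int\int\frac{\operatorname{Re}(\xi\cdot\overline{\eta})}{|1-\xi\cdot\overline{\eta}|^{\lambda/2}}u(\xi)u(\eta)\,d\sigma(\xi)d\sigma(\eta)\le(p-1)\int_{\mathbb{S}^{2m+1}}u^p\,d\sigma$. -/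
noncomputable section
open MeasureTheory Real

/-- The operator `I_λ f(ξ) = ∫ f(η) |1-ξ·η̄|^{-λ/2} dσ(η)`. -/
def Ilam (m : ℕ) (lam : ℝ) (f : Sph m → ℝ) (ξ : Sph m) : ℝ :=
  ∫ η : Sph m, f η / ‖(1 : ℂ) - hdot (ξ : EuclideanSpace ℂ (Fin (m + 1))) η‖ ^ (lam / 2)
    ∂(sphMeasure m)

/-- `L^p` norm (as a real number) with respect to the sphere measure. -/
def spNorm (m : ℕ) (p : ℝ) (f : Sph m → ℝ) : ℝ :=
  (eLpNorm f (ENNReal.ofReal p) (sphMeasure m)).toReal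

/-! Apply the second-variation inequality to the test functions `u ⟪b i, ·⟫`, for `b` a real
orthonormal basis of `ℂ^{m+1}`: they are admissible by the moment condition, and summing over `i`
turns `∑ ⟪b i, ξ⟫ ⟪b i, η⟫` into `Re (ξ · η̄)` and `∑ ⟪b i, ξ⟫²` into `1`.

The Euler–Lagrange equation supplies all integrability: `η ↦ u η / |1 - ξ · η̄|^{λ/2}` is integrable
for every `ξ`, since its integral is `u ξ ^ (p - 1) > 0`, and two antipodal poles then make `u`
itself integrable. If `u ^ p` is not integrable, the right side is the junk value `0`; the pointwise
lower bound `u ξ ^ p / 2 - C u ξ` for the inner integral on the left shows that the left side is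
`0` as well. -/

instance inst_s18 (m : ℕ) : IsFiniteMeasure (sphMeasure m) := by
  have : (volume : Measure (EuclideanSpace ℂ (Fin (m + 1)))).IsAddHaarMeasure :=
    isAddHaarMeasure_basis_addHaar _
  unfold sphMeasure
  infer_instance

namespace DoubleIntegralBound

variable {m : ℕ}

def sphKernel (lam : ℝ) (ξ η : Sph m) : ℝ :=
  ‖(1 : ℂ) - hdot ξ.1 η‖ ^ (lam / 2)

lemma hdot_eq_inner (x y : EuclideanSpace ℂ (Fin (m + 1))) : hdot x y = inner ℂ y x := by
  simp [hdot, PiLp.inner_apply, RCLike.inner_apply]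

lemma re_hdot_eq_sum_inner_mul_inner {ι : Type*} [Fintype ι]
    (b : OrthonormalBasis ι ℝ (EuclideanSpace ℂ (Fin (m + 1))))
    (x y : EuclideanSpace ℂ (Fin (m + 1))) :
    (hdot x y).re = ∑ i, inner ℝ (b i) x * inner ℝ (b i) y := by
  simp_rw [real_inner_comm x (b _)]
  rw [b.sum_inner_mul_inner]
  simp [hdot, PiLp.inner_apply, Complex.re_sum, Complex.inner, mul_comm]

lemma norm_hdot_le_one (ξ η : Sph m) : ‖hdot ξ.1 η‖ ≤ 1 := by
  simpa [hdot_eq_inner] using norm_inner_le_norm (𝕜 := ℂ) η.1 ξ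

lemma hdot_eq_one_iff {ξ η : Sph m} : hdot ξ.1 η = 1 ↔ η = ξ := by
  rw [hdot_eq_inner, inner_eq_one_iff_of_norm_eq_one (by simp) (by simp), Subtype.ext_iff]

lemma norm_one_sub_hdot_le_two (ξ η : Sph m) :
    ‖(1 : ℂ) - hdot ξ.1 η‖ ≤ 2 := by
  calc _ ≤ ‖(1 : ℂ)‖ + ‖hdot ξ.1 η‖ := norm_sub_le _ _
    _ ≤ 2 := by linarith [norm_hdot_le_one ξ η, norm_one (α := ℂ)]

lemma sphKernel_nonneg (lam : ℝ) (ξ η : Sph m) : 0 ≤ sphKernel lam ξ η :=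
  Real.rpow_nonneg (norm_nonneg _) _

lemma sphKernel_le {lam : ℝ} (hlam : 0 ≤ lam) (ξ η : Sph m) :
    sphKernel lam ξ η ≤ 2 ^ (lam / 2) :=
  Real.rpow_le_rpow (norm_nonneg _) (norm_one_sub_hdot_le_two ξ η) (by linarith)

lemma sphKernel_eq_zero_iff {lam : ℝ} (hlam : 0 < lam) {ξ η : Sph m} :
    sphKernel lam ξ η = 0 ↔ η = ξ := by
  rw [sphKernel, Real.rpow_eq_zero (norm_nonneg _) (by positivity), norm_eq_zero, sub_eq_zero,
    eq_comm, hdot_eq_one_iff]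

lemma measurable_sphKernel (lam : ℝ) : Measurable (Function.uncurry (sphKernel (m := m) lam)) := by
  have hcont : Continuous fun q : Sph m × Sph m =>
      ‖(1 : ℂ) - hdot q.1.1 q.2‖ := by
    simp only [hdot_eq_inner]
    fun_prop
  exact hcont.measurable.pow_const _

section Integrability

variable {μ : Measure (Sph m)} {lam : ℝ} {u : Sph m → ℝ}

/-- The kernels centred at `ξ` and `-ξ` never vanish at the same point. -/
lemma eq_max_div_mul_sphKernel (hlam : 0 < lam) {a : ℝ} (ha : 0 ≤ a) (ξ η : Sph m) :
    a = max (a / sphKernel lam ξ η * sphKernel lam ξ η)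
      (a / sphKernel lam (-ξ) η * sphKernel lam (-ξ) η) := by
  have hξ : -ξ ≠ ξ := (ne_neg_of_mem_unit_sphere ℝ ξ).symm
  by_cases hη : η = ξ
  · subst hη
    rw [(sphKernel_eq_zero_iff hlam).2 rfl,
      div_mul_cancel₀ _ ((sphKernel_eq_zero_iff hlam).not.2 hξ.symm)]
    simp [ha]
  · rw [div_mul_cancel₀ _ ((sphKernel_eq_zero_iff hlam).not.2 hη)]
    by_cases hη' : η = -ξ
    · simp [(sphKernel_eq_zero_iff hlam).2 hη', ha]
    · simp [div_mul_cancel₀ _ ((sphKernel_eq_zero_iff hlam).not.2 hη')]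

lemma aestronglyMeasurable_of_integrable_div_sphKernel (hlam : 0 < lam) (hu : ∀ η, 0 ≤ u η)
    (hint : ∀ ξ, Integrable (fun η => u η / sphKernel lam ξ η) μ) :
    AEStronglyMeasurable u μ := by
  have hK (ζ : Sph m) :
      AEStronglyMeasurable (fun η => u η / sphKernel lam ζ η * sphKernel lam ζ η) μ :=
    (hint ζ).1.mul (measurable_sphKernel lam).of_uncurry_left.aestronglyMeasurable
  obtain ⟨ξ⟩ : Nonempty (Sph m) := (NormedSpace.sphere_nonempty.2 zero_le_one).to_subtype
  rw [funext fun η => eq_max_div_mul_sphKernel hlam (hu η) ξ η]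
  exact (hK ξ).sup (hK (-ξ))

lemma integrable_of_integrable_div_sphKernel (hlam : 0 < lam) (hu : ∀ η, 0 ≤ u η)
    (hint : ∀ ξ, Integrable (fun η => u η / sphKernel lam ξ η) μ) : Integrable u μ := by
  obtain ⟨ξ⟩ : Nonempty (Sph m) := (NormedSpace.sphere_nonempty.2 zero_le_one).to_subtype
  have hle (ζ η : Sph m) : u η / sphKernel lam ζ η * sphKernel lam ζ η
      ≤ 2 ^ (lam / 2) * (u η / sphKernel lam ζ η) := by
    rw [mul_comm]
    exact mul_le_mul_of_nonneg_right (sphKernel_le hlam.le ζ η)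
      (div_nonneg (hu η) (sphKernel_nonneg lam ζ η))
  refine (((hint ξ).add (hint (-ξ))).const_mul (2 ^ (lam / 2))).mono'
    (aestronglyMeasurable_of_integrable_div_sphKernel hlam hu hint) (.of_forall fun η => ?_)
  rw [Real.norm_of_nonneg (hu η), eq_max_div_mul_sphKernel hlam (hu η) ξ η, Pi.add_apply, mul_add]
  refine max_le_add_of_nonneg ?_ ?_ |>.trans (add_le_add (hle ξ η) (hle (-ξ) η))
  all_goals exact mul_nonneg (div_nonneg (hu η) (sphKernel_nonneg _ _ _)) (sphKernel_nonneg _ _ _)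

end Integrability

section EulerLagrange

variable {μ : Measure (Sph m)} {lam p : ℝ} {u f : Sph m → ℝ}
  (hu : ∀ ξ, 0 < u ξ) (hEL : ∀ ξ, ∫ η, u η / sphKernel lam ξ η ∂μ = u ξ ^ (p - 1))
include hu hEL

lemma integrable_div_sphKernel (ξ : Sph m) :
    Integrable (fun η => u η / sphKernel lam ξ η) μ :=
  .of_integral_ne_zero (by rw [hEL]; exact (Real.rpow_pos_of_pos (hu ξ) _).ne')

lemma integral_mul_div_sphKernel (ξ : Sph m) :
    ∫ η, u ξ * (u η / sphKernel lam ξ η) ∂μ = u ξ ^ p := by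
  rw [integral_const_mul, hEL, Real.rpow_sub_one (hu ξ).ne', mul_div_cancel₀ _ (hu ξ).ne']

omit hu hEL in
lemma abs_mul_div_sphKernel_le (hfu : ∀ ξ, |f ξ| ≤ u ξ) (ξ η : Sph m) :
    |f ξ * f η / sphKernel lam ξ η| ≤ u ξ * (u η / sphKernel lam ξ η) := by
  have hK := sphKernel_nonneg lam ξ η
  rw [abs_div, abs_mul, abs_of_nonneg hK, mul_div_assoc]
  exact mul_le_mul (hfu ξ) (div_le_div_of_nonneg_right (hfu η) hK)
    (div_nonneg (abs_nonneg _) hK) ((abs_nonneg _).trans (hfu ξ))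

lemma integrable_mul_div_sphKernel (hf : AEStronglyMeasurable f μ) (hfu : ∀ ξ, |f ξ| ≤ u ξ)
    (ξ : Sph m) : Integrable (fun η => f ξ * f η / sphKernel lam ξ η) μ :=
  ((integrable_div_sphKernel hu hEL ξ).const_mul (u ξ)).mono'
    ((hf.const_mul (f ξ)).aemeasurable.div
      (measurable_sphKernel lam).of_uncurry_left.aemeasurable).aestronglyMeasurable
    (.of_forall fun η => abs_mul_div_sphKernel_le hfu ξ η)

lemma abs_integral_mul_div_sphKernel_le (hfu : ∀ ξ, |f ξ| ≤ u ξ) (ξ : Sph m) :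
    |∫ η, f ξ * f η / sphKernel lam ξ η ∂μ| ≤ u ξ ^ p := by
  rw [← integral_mul_div_sphKernel hu hEL ξ]
  exact norm_integral_le_of_norm_le (f := fun η => f ξ * f η / sphKernel lam ξ η)
    ((integrable_div_sphKernel hu hEL ξ).const_mul _)
    (.of_forall fun η => abs_mul_div_sphKernel_le hfu ξ η)

lemma integrable_integral_mul_div_sphKernel [IsFiniteMeasure μ] (hf : AEStronglyMeasurable f μ)
    (hfu : ∀ ξ, |f ξ| ≤ u ξ) (hup : Integrable (fun ξ => u ξ ^ p) μ) :
    Integrable (fun ξ => ∫ η, f ξ * f η / sphKernel lam ξ η ∂μ) μ := by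
  have hprod : AEStronglyMeasurable (fun q : Sph m × Sph m => f q.1 * f q.2 / sphKernel lam q.1 q.2)
      (μ.prod μ) :=
    ((hf.comp_fst.mul hf.comp_snd).aemeasurable.div
      (measurable_sphKernel lam).aemeasurable).aestronglyMeasurable
  exact hup.mono' hprod.integral_prod_right'
    (.of_forall fun ξ => abs_integral_mul_div_sphKernel_le hu hEL hfu ξ)

end EulerLagrange

section CoordTest

variable {ι : Type*} [Fintype ι] (b : OrthonormalBasis ι ℝ (EuclideanSpace ℂ (Fin (m + 1))))
  {μ : Measure (Sph m)} {p : ℝ} {u : Sph m → ℝ}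

/-- For the real basis `e_j, I • e_j` these are the test functions `u Re ξ_j`, `u Im ξ_j`. -/
def coordTest (u : Sph m → ℝ) (i : ι) (ξ : Sph m) : ℝ :=
  u ξ * inner ℝ (b i) ξ.1

lemma abs_coordTest_le (hu : ∀ ξ, 0 ≤ u ξ) (i : ι) (ξ : Sph m) : |coordTest b u i ξ| ≤ u ξ := by
  rw [coordTest, abs_mul, abs_of_nonneg (hu ξ)]
  refine mul_le_of_le_one_right (hu ξ) ?_
  simpa [b.orthonormal.1 i] using abs_real_inner_le_norm (b i) ξ.1

lemma aestronglyMeasurable_coordTest (hu : AEStronglyMeasurable u μ) (i : ι) :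
    AEStronglyMeasurable (coordTest b u i) μ :=
  hu.mul (by fun_prop : Continuous fun ξ : Sph m =>
    inner ℝ (b i) ξ.1).aestronglyMeasurable

lemma sum_coordTest_mul (u : Sph m → ℝ) (ξ η : Sph m) :
    ∑ i, coordTest b u i ξ * coordTest b u i η
      = (hdot ξ.1 η).re * u ξ * u η := by
  rw [re_hdot_eq_sum_inner_mul_inner b, Finset.sum_mul, Finset.sum_mul]
  exact Finset.sum_congr rfl fun i _ => by simp only [coordTest]; ring

lemma sum_coordTest_sq (u : Sph m → ℝ) (ξ : Sph m) : ∑ i, coordTest b u i ξ ^ 2 = u ξ ^ 2 := by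
  simpa [sq, hdot_eq_one_iff.2 rfl] using sum_coordTest_mul b u ξ ξ

lemma integral_rpow_sub_one_mul_coordTest (hu : ∀ ξ, 0 < u ξ)
    (hup : Integrable (fun ξ => u ξ ^ p) μ)
    (hmom : ∫ ξ, u ξ ^ p • ξ.1 ∂μ = 0) (i : ι) :
    ∫ ξ, u ξ ^ (p - 1) * coordTest b u i ξ ∂μ = 0 := by
  have hint : Integrable (fun ξ : Sph m => u ξ ^ p • ξ.1) μ :=
    hup.mono' (hup.1.smul continuous_subtype_val.aestronglyMeasurable)
      (.of_forall fun ξ => by simp [norm_smul, abs_of_pos (Real.rpow_pos_of_pos (hu ξ) p)])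
  calc ∫ ξ, u ξ ^ (p - 1) * coordTest b u i ξ ∂μ
      = ∫ ξ, inner ℝ (b i) (u ξ ^ p • ξ.1) ∂μ := by
        refine integral_congr_ae (.of_forall fun ξ => ?_)
        simp only [coordTest, inner_smul_right, Real.rpow_sub_one (hu ξ).ne']
        field_simp [(hu ξ).ne']
    _ = 0 := by rw [integral_inner hint, hmom, inner_zero_right]

lemma sum_integral_rpow_sub_two_mul_coordTest_sq (hu : ∀ ξ, 0 < u ξ)
    (hmeas : AEStronglyMeasurable u μ) (hup : Integrable (fun ξ => u ξ ^ p) μ) :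
    ∑ i, ∫ ξ, u ξ ^ (p - 2) * coordTest b u i ξ ^ 2 ∂μ = ∫ ξ, u ξ ^ p ∂μ := by
  have hsq (ξ : Sph m) : u ξ ^ (p - 2) * u ξ ^ 2 = u ξ ^ p := by
    rw [Real.rpow_sub (hu ξ), Real.rpow_two, div_mul_cancel₀ _ (pow_pos (hu ξ) 2).ne']
  have hint (i : ι) : Integrable (fun ξ => u ξ ^ (p - 2) * coordTest b u i ξ ^ 2) μ := by
    refine hup.mono' ((hmeas.aemeasurable.pow_const _).mul
      ((aestronglyMeasurable_coordTest b hmeas i).aemeasurable.pow_const 2)).aestronglyMeasurable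
      (.of_forall fun ξ => ?_)
    have hpow := Real.rpow_nonneg (hu ξ).le (p - 2)
    rw [Real.norm_of_nonneg (by positivity), ← hsq ξ, ← sq_abs (coordTest b u i ξ)]
    exact mul_le_mul_of_nonneg_left
      (pow_le_pow_left₀ (abs_nonneg _) (abs_coordTest_le b (fun ξ => (hu ξ).le) i ξ) 2) hpow
  rw [← integral_finsetSum _ fun i _ => hint i]
  simp_rw [← Finset.mul_sum, sum_coordTest_sq, hsq]

end CoordTest

section SecondVariation

variable {μ : Measure (Sph m)} [IsFiniteMeasure μ] {lam p : ℝ} {u : Sph m → ℝ}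

lemma integral_integral_re_hdot_le_of_integrable (hlam : 0 < lam) (hu : ∀ ξ, 0 < u ξ)
    (hEL : ∀ ξ, ∫ η, u η / sphKernel lam ξ η ∂μ = u ξ ^ (p - 1))
    (h2nd : ∀ f : Sph m → ℝ, ∫ ξ, u ξ ^ (p - 1) * f ξ ∂μ = 0 →
      ∫ ξ, ∫ η, f ξ * f η / sphKernel lam ξ η ∂μ ∂μ ≤ (p - 1) * ∫ ξ, u ξ ^ (p - 2) * f ξ ^ 2 ∂μ)
    (hmom : ∫ ξ, u ξ ^ p • ξ.1 ∂μ = 0)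
    (hup : Integrable (fun ξ => u ξ ^ p) μ) :
    ∫ ξ, ∫ η, (hdot ξ.1 η).re * u ξ * u η / sphKernel lam ξ η ∂μ ∂μ
      ≤ (p - 1) * ∫ ξ, u ξ ^ p ∂μ := by
  let b := stdOrthonormalBasis ℝ (EuclideanSpace ℂ (Fin (m + 1)))
  have hmeas := aestronglyMeasurable_of_integrable_div_sphKernel hlam (fun ξ => (hu ξ).le)
    (integrable_div_sphKernel hu hEL)
  have hf := aestronglyMeasurable_coordTest b hmeas
  have hfu := abs_coordTest_le b (fun ξ => (hu ξ).le)
  calc _ = ∑ i, ∫ ξ, ∫ η, coordTest b u i ξ * coordTest b u i η / sphKernel lam ξ η ∂μ ∂μ := by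
        rw [← integral_finsetSum _ fun i _ =>
          integrable_integral_mul_div_sphKernel hu hEL (hf i) (hfu i) hup]
        refine integral_congr_ae (.of_forall fun ξ => ?_)
        dsimp only
        rw [← integral_finsetSum _ fun i _ => integrable_mul_div_sphKernel hu hEL (hf i) (hfu i) ξ]
        simp_rw [← Finset.sum_div, sum_coordTest_mul]
    _ ≤ ∑ i, (p - 1) * ∫ ξ, u ξ ^ (p - 2) * coordTest b u i ξ ^ 2 ∂μ :=
        Finset.sum_le_sum fun i _ => h2nd _ (integral_rpow_sub_one_mul_coordTest b hu hup hmom i)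
    _ = (p - 1) * ∫ ξ, u ξ ^ p ∂μ := by
        rw [← Finset.mul_sum, sum_integral_rpow_sub_two_mul_coordTest_sq b hu hmeas hup]

end SecondVariation

section NonIntegrable

/-- Where `t` is small the factor `x ≥ 1 - t` is at least `1/2`; elsewhere `t ^ s` is bounded
below. -/
lemma div_rpow_div_two_sub_le_mul_div_rpow {x t a s : ℝ} (hs : 0 ≤ s) (ht : 0 ≤ t)
    (hxt : 1 - x ≤ t) (ht2 : t ≤ 2) (ha : 0 ≤ a) :
    a / t ^ s / 2 - 2 ^ (s + 1) * a ≤ x * (a / t ^ s) := by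
  have hy : 0 ≤ a / t ^ s := div_nonneg ha (Real.rpow_nonneg ht s)
  have h2s : (0 : ℝ) < 2 ^ s := by positivity
  rw [Real.rpow_add_one two_ne_zero]
  rcases le_or_gt t (1 / 2) with hsmall | hlarge
  · nlinarith
  · have hbound : a / t ^ s ≤ 2 ^ s * a := by
      calc a / t ^ s ≤ a / (1 / 2) ^ s :=
            div_le_div_of_nonneg_left ha (by positivity)
              (Real.rpow_le_rpow (by norm_num) hlarge.le hs)
        _ = 2 ^ s * a := by
            rw [Real.div_rpow zero_le_one zero_le_two, Real.one_rpow]; field_simp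
    nlinarith

variable {μ : Measure (Sph m)} {lam p : ℝ} {u : Sph m → ℝ} (hlam : 0 < lam) (hu : ∀ ξ, 0 < u ξ)
  (hEL : ∀ ξ, ∫ η, u η / sphKernel lam ξ η ∂μ = u ξ ^ (p - 1))
include hlam hu hEL

lemma rpow_div_two_sub_le_integral_re_hdot (ξ : Sph m) :
    u ξ ^ p / 2 - 2 ^ (lam / 2 + 1) * (∫ η, u η ∂μ) * u ξ
      ≤ ∫ η, (hdot ξ.1 η).re * u ξ * u η / sphKernel lam ξ η ∂μ := by
  let b := stdOrthonormalBasis ℝ (EuclideanSpace ℂ (Fin (m + 1)))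
  have hK := integrable_div_sphKernel hu hEL
  have hmeas := aestronglyMeasurable_of_integrable_div_sphKernel hlam (fun ξ => (hu ξ).le) hK
  have hint : Integrable (fun η : Sph m => (hdot ξ.1 η).re * u ξ * u η
      / sphKernel lam ξ η) μ := by
    simp_rw [← sum_coordTest_mul b, Finset.sum_div]
    exact integrable_finsetSum _ fun i _ => integrable_mul_div_sphKernel hu hEL
      (aestronglyMeasurable_coordTest b hmeas i) (abs_coordTest_le b (fun ξ => (hu ξ).le) i) ξ
  have hint_u := integrable_of_integrable_div_sphKernel hlam (fun ξ => (hu ξ).le) hK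
  calc u ξ ^ p / 2 - 2 ^ (lam / 2 + 1) * (∫ η, u η ∂μ) * u ξ
      = ∫ η, (u ξ * (u η / sphKernel lam ξ η) / 2 - 2 ^ (lam / 2 + 1) * u ξ * u η) ∂μ := by
        rw [integral_sub (((hK ξ).const_mul _).div_const _) ((hint_u.const_mul _)),
          integral_div, integral_mul_div_sphKernel hu hEL, integral_const_mul]
        ring
    _ ≤ _ := by
        refine integral_mono ((((hK ξ).const_mul _).div_const _).sub (hint_u.const_mul _)) hint
          fun η => ?_
        have h : u η / sphKernel lam ξ η / 2 - 2 ^ (lam / 2 + 1) * u η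
            ≤ (hdot ξ.1 η).re * (u η / sphKernel lam ξ η) :=
          div_rpow_div_two_sub_le_mul_div_rpow (by positivity) (norm_nonneg _)
            (by simpa using Complex.re_le_norm (1 - hdot ξ.1 η))
            (norm_one_sub_hdot_le_two ξ η) (hu η).le
        have := mul_le_mul_of_nonneg_left h (hu ξ).le
        simp only [mul_div_assoc] at this ⊢
        linarith

lemma not_integrable_integral_re_hdot (hup : ¬Integrable (fun ξ => u ξ ^ p) μ) :
    ¬Integrable (fun ξ : Sph m => ∫ η : Sph m, (hdot ξ.1 η).re * u ξ * u η
      / sphKernel lam ξ η ∂μ) μ := by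
  intro hT
  have hK := integrable_div_sphKernel hu hEL
  have hint_u := integrable_of_integrable_div_sphKernel hlam (fun ξ => (hu ξ).le) hK
  have hmeas := aestronglyMeasurable_of_integrable_div_sphKernel hlam (fun ξ => (hu ξ).le) hK
  refine hup <| ((hT.const_mul 2).add
    (hint_u.const_mul (2 * 2 ^ (lam / 2 + 1) * ∫ η, u η ∂μ))).mono'
    (hmeas.aemeasurable.pow_const p).aestronglyMeasurable (.of_forall fun ξ => ?_)
  rw [Real.norm_of_nonneg (Real.rpow_nonneg (hu ξ).le p), Pi.add_apply]
  linarith [rpow_div_two_sub_le_integral_re_hdot hlam hu hEL ξ]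

end NonIntegrable

end DoubleIntegralBound

theorem double_integral_bound_general {m : ℕ} (lam : ℝ) (hlam0 : 0 < lam) (p : ℝ)
    (u : Sph m → ℝ) (hu0 : ∀ ξ, 0 < u ξ)
    (hEL : ∀ ξ, Ilam m lam u ξ = u ξ ^ (p - 1))
    (h2nd : ∀ f : Sph m → ℝ,
      (∫ ξ : Sph m, u ξ ^ (p - 1) * f ξ ∂(sphMeasure m)) = 0 →
      (∫ ξ : Sph m, ∫ η : Sph m, f ξ * f η /
          ‖(1 : ℂ) - hdot (ξ : EuclideanSpace ℂ (Fin (m + 1))) η‖ ^ (lam / 2)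
          ∂(sphMeasure m) ∂(sphMeasure m)) ≤
        (p - 1) * ∫ ξ : Sph m, u ξ ^ (p - 2) * f ξ ^ 2 ∂(sphMeasure m))
    (hmom : (∫ ξ : Sph m, u ξ ^ p • (ξ : EuclideanSpace ℂ (Fin (m + 1)))
      ∂(sphMeasure m)) = 0) :
    (∫ ξ : Sph m, ∫ η : Sph m,
        (hdot (ξ : EuclideanSpace ℂ (Fin (m + 1))) η).re * u ξ * u η /
          ‖(1 : ℂ) - hdot (ξ : EuclideanSpace ℂ (Fin (m + 1))) η‖ ^ (lam / 2)
        ∂(sphMeasure m) ∂(sphMeasure m)) ≤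
      (p - 1) * ∫ ξ : Sph m, u ξ ^ p ∂(sphMeasure m) := by
  by_cases hup : Integrable (fun ξ => u ξ ^ p) (sphMeasure m)
  · exact DoubleIntegralBound.integral_integral_re_hdot_le_of_integrable hlam0 hu0 hEL h2nd hmom
      hup
  · rw [integral_undef hup, mul_zero]
    exact (integral_undef
      (DoubleIntegralBound.not_integrable_integral_re_hdot hlam0 hu0 hEL hup)).le

theorem double_integral_bound {m : ℕ} (hm : 1 ≤ m) (lam : ℝ) (hlam0 : 0 < lam)
    (hlam1 : lam < 2 * m + 2) (p : ℝ) (hp : 2 * (2 * m + 2) / (2 * (2 * m + 2) - lam) < p)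
    (u : Sph m → ℝ) (hu0 : ∀ ξ, 0 < u ξ)
    (hEL : ∀ ξ, Ilam m lam u ξ = u ξ ^ (p - 1))
    (h2nd : ∀ f : Sph m → ℝ,
      (∫ ξ : Sph m, u ξ ^ (p - 1) * f ξ ∂(sphMeasure m)) = 0 →
      (∫ ξ : Sph m, ∫ η : Sph m, f ξ * f η /
          ‖(1 : ℂ) - hdot (ξ : EuclideanSpace ℂ (Fin (m + 1))) η‖ ^ (lam / 2)
          ∂(sphMeasure m) ∂(sphMeasure m)) ≤
        (p - 1) * ∫ ξ : Sph m, u ξ ^ (p - 2) * f ξ ^ 2 ∂(sphMeasure m))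
    (hmom : (∫ ξ : Sph m, u ξ ^ p • (ξ : EuclideanSpace ℂ (Fin (m + 1)))
      ∂(sphMeasure m)) = 0) :
    (∫ ξ : Sph m, ∫ η : Sph m,
        (hdot (ξ : EuclideanSpace ℂ (Fin (m + 1))) η).re * u ξ * u η /
          ‖(1 : ℂ) - hdot (ξ : EuclideanSpace ℂ (Fin (m + 1))) η‖ ^ (lam / 2)
        ∂(sphMeasure m) ∂(sphMeasure m)) ≤
      (p - 1) * ∫ ξ : Sph m, u ξ ^ p ∂(sphMeasure m) :=
  double_integral_bound_general lam hlam0 p u hu0 hEL h2nd hmom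
end
end
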